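/- arXiv:2202.01233 — 2 statements merged into one kernel-verified Lean document; each statement's English description precedes it below -/
import Mathlib

section
/- For every natural number k ≥ 1, with t = 2^k, there exists a set S of 2t binary strings of length t (namely the all-ones string together with 2t − 1 additional strings) such that any two distinct strings in S differ in at least t/2 coordinates (Hamming distance ≥ t/2). -/
/-!
The strings are the value tables of the affine functions `v ↦ c + d ⬝ᵥ v` on `(ZMod 2)^k`
(the first-order Reed–Muller code), read through an enumeration of `(ZMod 2)^k` by `Fin (2^k)`.
The difference of two distinct affine functions is a nonzero affine function. It is either a
nonzero constant, or its linear part is a surjective functional, whose fibres all have the same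
size; in both cases it is nonzero on at least half of the `2^k` points.
-/

open Finset Matrix

theorem hammingDist_comp_equiv {ι κ β : Type*} [Fintype ι] [Fintype κ] [DecidableEq β]
    (e : ι ≃ κ) (x y : κ → β) : hammingDist (x ∘ e) (y ∘ e) = hammingDist x y :=
  card_equiv e (by simp)

section AffineFun

variable {R : Type*} [CommRing R] {k : ℕ}

def affineFun (p : R × (Fin k → R)) (v : Fin k → R) : R := p.1 + p.2 ⬝ᵥ v

theorem affineFun_sub (p q : R × (Fin k → R)) :
    affineFun p - affineFun q = affineFun (p - q) := by
  funext v
  simp only [affineFun, Pi.sub_apply, Prod.fst_sub, Prod.snd_sub, sub_dotProduct]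
  ring

theorem affineFun_injective : Function.Injective (affineFun : R × (Fin k → R) → _) := by
  intro p q h
  have hc : p.1 = q.1 := by simpa [affineFun] using congrFun h 0
  refine Prod.ext hc (funext fun i => ?_)
  simpa [affineFun, hc, dotProduct_single] using congrFun h (Pi.single i 1)

end AffineFun

section FiniteField

variable {F : Type*} [Field F] [Fintype F] [DecidableEq F] {k : ℕ}

theorem card_mul_card_filter_dotProduct_eq {d : Fin k → F} (hd : d ≠ 0) (x : F) :
    Fintype.card F * #{v : Fin k → F | d ⬝ᵥ v = x} = Fintype.card F ^ k := by
  obtain ⟨i, hi⟩ := Function.ne_iff.mp hd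
  let L : (Fin k → F) →+ F := AddMonoidHom.mk' (d ⬝ᵥ ·) (dotProduct_add d)
  have hL : Function.Surjective L := fun y =>
    ⟨Pi.single i (y / d i), by simp [L, dotProduct_single, mul_div_cancel₀ _ hi]⟩
  calc Fintype.card F * #{v : Fin k → F | d ⬝ᵥ v = x}
      = ∑ y : F, #{v : Fin k → F | L v = y} := by
        rw [sum_congr rfl fun y _ => AddMonoidHom.card_fiber_eq_of_mem_range L (hL y) (hL x)]
        simp [L]
    _ = Fintype.card F ^ k := by
        rw [← card_eq_sum_card_fiberwise (by simp), card_univ, Fintype.card_fun, Fintype.card_fin]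

theorem card_sub_one_mul_le_card_mul_hammingNorm_affineFun {p : F × (Fin k → F)} (hp : p ≠ 0) :
    (Fintype.card F - 1) * Fintype.card F ^ k ≤ Fintype.card F * hammingNorm (affineFun p) := by
  obtain ⟨c, d⟩ := p
  unfold hammingNorm affineFun
  by_cases hd : d = 0
  · have hc : c ≠ 0 := by rintro rfl; exact hp (by simp [hd])
    simpa [hd, hc] using Nat.mul_le_mul_right _ (Nat.sub_le _ 1)
  · have hcompl : ({v | c + d ⬝ᵥ v ≠ 0} : Finset (Fin k → F)) =
        univ \ ({v | d ⬝ᵥ v = -c} : Finset _) := by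
      ext v; simp [eq_neg_iff_add_eq_zero, add_comm c]
    rw [hcompl, card_sdiff_of_subset (subset_univ _), card_univ, Fintype.card_fun, Fintype.card_fin,
      Nat.mul_sub, card_mul_card_filter_dotProduct_eq hd, Nat.sub_one_mul]

variable (F k) in
def affineCode : Finset ((Fin k → F) → F) := univ.image affineFun

theorem card_affineCode : #(affineCode F k) = Fintype.card F * Fintype.card F ^ k := by
  simp [affineCode, card_image_of_injective _ affineFun_injective]

theorem one_mem_affineCode : (1 : (Fin k → F) → F) ∈ affineCode F k :=
  mem_image.2 ⟨(1, 0), mem_univ _, funext fun _ => by simp [affineFun]⟩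

theorem card_sub_one_mul_le_card_mul_hammingDist {x y : (Fin k → F) → F}
    (hx : x ∈ affineCode F k) (hy : y ∈ affineCode F k) (hxy : x ≠ y) :
    (Fintype.card F - 1) * Fintype.card F ^ k ≤ Fintype.card F * hammingDist x y := by
  obtain ⟨p, -, rfl⟩ := mem_image.1 hx
  obtain ⟨q, -, rfl⟩ := mem_image.1 hy
  rw [hammingDist_eq_hammingNorm, neg_add_eq_sub, affineFun_sub]
  exact card_sub_one_mul_le_card_mul_hammingNorm_affineFun
    (sub_ne_zero.2 (ne_of_apply_ne _ hxy).symm)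

end FiniteField

theorem stmt_0_general (k : ℕ) :
    ∃ S : Finset (Fin (2 ^ k) → Bool),
      S.card = 2 * 2 ^ k ∧
      (fun _ => true) ∈ S ∧
      ∀ x ∈ S, ∀ y ∈ S, x ≠ y → 2 ^ k / 2 ≤ hammingDist x y := by
  let e : Fin (2 ^ k) ≃ (Fin k → ZMod 2) := (Fintype.equivFinOfCardEq (by simp)).symm
  let toBool : ZMod 2 → Bool := fun b => decide (b = 1)
  have htoBool : Function.Injective toBool := by decide
  let toWord : ((Fin k → ZMod 2) → ZMod 2) → Fin (2 ^ k) → Bool :=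
    fun x => toBool ∘ x ∘ e
  have hdist (x y) : hammingDist (toWord x) (toWord y) = hammingDist x y :=
    (hammingDist_comp (fun _ => toBool) fun _ => htoBool).trans (hammingDist_comp_equiv e x y)
  have hinj : Function.Injective toWord := fun x y h => by
    rw [← hammingDist_eq_zero, ← hdist, h, hammingDist_self]
  refine ⟨(affineCode (ZMod 2) k).image toWord, ?_, ?_, ?_⟩
  · rw [card_image_of_injective _ hinj, card_affineCode, ZMod.card]
  · exact mem_image.2 ⟨1, one_mem_affineCode, rfl⟩
  · rintro _ hx' _ hy' hxy
    obtain ⟨x, hx, rfl⟩ := mem_image.1 hx'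
    obtain ⟨y, hy, rfl⟩ := mem_image.1 hy'
    have hbound := card_sub_one_mul_le_card_mul_hammingDist hx hy (ne_of_apply_ne _ hxy)
    rw [ZMod.card] at hbound
    rw [hdist]
    omega

/-- For every `k ≥ 1`, with `t = 2^k`, there exists a set `S` of `2*t` binary
strings of length `t`, containing the all-ones string, such that any two
distinct strings in `S` differ in at least `t/2` coordinates. -/
theorem stmt_0 (k : ℕ) (hk : 1 ≤ k) :
    ∃ S : Finset (Fin (2 ^ k) → Bool),
      S.card = 2 * 2 ^ k ∧
      (fun _ => true) ∈ S ∧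
      ∀ x ∈ S, ∀ y ∈ S, x ≠ y → 2 ^ k / 2 ≤ hammingDist x y :=
  stmt_0_general k
end

section
/- Extension to general even lengths: for any t whose binary expansion has lowest set bit at position k (so 2^k divides t but 2^{k+1} does not), there exist 2^{k+1} − 1 binary strings of length t that mutually differ from each other and from a given string by at least t/2 coordinates, obtained by concatenating t/2^k copies of the length-2^k strings from the power-of-two construction. -/
open Finset Matrix

/-!
The affine functions `x ↦ a ⬝ᵥ x + b` on `𝔽₂ᵏ` (the first-order Reed–Muller code) are
`2 ^ (k + 1)` words of length `2 ^ k` in which every nonzero word has weight at least `2 ^ k / 2`: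
if `a j = 1`, translating by the `j`-th basis vector swaps the zeros and ones of the function.
Repeating each word `t / 2 ^ k` times multiplies all distances by `t / 2 ^ k`, and XOR with `w`
moves the zero word to `w` without changing distances.
-/

lemma card_eq_two_mul_hammingNorm_of_map_add {V : Type*} [Fintype V] [AddGroup V]
    {f : V → ZMod 2} {v : V} (hv : ∀ x, f (x + v) = f x + 1) :
    Fintype.card V = 2 * hammingNorm f := by
  have hflip : #{x | f x = 0} = hammingNorm f :=
    Finset.card_equiv (Equiv.addRight v) fun x => by
      simpa [hv] using (by decide : ∀ z : ZMod 2, z = 0 ↔ z + 1 ≠ 0) (f x)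
  rw [← Finset.card_univ, ← card_filter_add_card_filter_not (fun x => f x = 0), hflip, two_mul]
  rfl

section AffineForm

variable {ι : Type*} [Fintype ι]

def affineForm (p : (ι → ZMod 2) × ZMod 2) (x : ι → ZMod 2) : ZMod 2 := p.1 ⬝ᵥ x + p.2

@[simp]
lemma affineForm_zero : affineForm (0 : (ι → ZMod 2) × ZMod 2) = 0 := by
  ext x; simp [affineForm]

lemma neg_affineForm_add_affineForm (p q : (ι → ZMod 2) × ZMod 2) :
    -affineForm p + affineForm q = affineForm (q - p) := by
  ext x
  simp only [affineForm, Pi.add_apply, Pi.neg_apply, Prod.fst_sub, Prod.snd_sub, sub_dotProduct]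
  ring

lemma two_pow_card_le_two_mul_hammingNorm_affineForm [DecidableEq ι]
    {p : (ι → ZMod 2) × ZMod 2} (hp : p ≠ 0) :
    2 ^ Fintype.card ι ≤ 2 * hammingNorm (affineForm p) := by
  obtain ⟨a, b⟩ := p
  by_cases ha : a = 0
  · subst ha
    have hb : b ≠ 0 := by simpa using hp
    have : hammingNorm (affineForm ((0 : ι → ZMod 2), b)) = 2 ^ Fintype.card ι := by
      simp [hammingNorm, affineForm, hb, ZMod.card]
    omega
  · obtain ⟨j, hj⟩ := Function.ne_iff.mp ha
    have haj : a j = 1 := by simpa using (by decide : ∀ z : ZMod 2, z ≠ 0 → z = 1) _ hj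
    have hv : ∀ x, affineForm (a, b) (x + Pi.single j 1) = affineForm (a, b) x + 1 := by
      intro x
      simp only [affineForm, dotProduct_add, dotProduct_single, haj, mul_one]
      ring
    rw [← card_eq_two_mul_hammingNorm_of_map_add hv]
    simp [ZMod.card]

end AffineForm

lemma hammingDist_comp_snd_equiv {ι M V β : Type*} [Fintype ι] [Fintype M] [Fintype V]
    [DecidableEq β] (e : ι ≃ M × V) (x y : V → β) :
    hammingDist (fun i => x (e i).2) (fun i => y (e i).2) = Fintype.card M * hammingDist x y :=
  calc hammingDist (fun i => x (e i).2) (fun i => y (e i).2)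
      = #(univ ×ˢ ({v | x v ≠ y v} : Finset V)) := card_equiv e (by simp)
    _ = _ := by rw [card_product, card_univ]; rfl

def offsetBy {ι : Type*} (w : ι → Bool) (c : ι → ZMod 2) : ι → Bool :=
  fun i => xor (w i) (decide (c i = 1))

@[simp]
lemma offsetBy_zero {ι : Type*} (w : ι → Bool) : offsetBy w 0 = w := by
  ext; simp [offsetBy]

lemma hammingDist_offsetBy {ι : Type*} [Fintype ι] (w : ι → Bool) (c c' : ι → ZMod 2) :
    hammingDist (offsetBy w c) (offsetBy w c') = hammingDist c c' :=
  hammingDist_comp (fun i z => xor (w i) (decide (z = 1))) fun i =>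
    (by decide : ∀ b : Bool, Function.Injective fun z : ZMod 2 => xor b (decide (z = 1))) (w i)

theorem stmt_18_general (t k : ℕ) (ht : 0 < t)
    (hk : 2 ^ k ∣ t) (w : Fin t → Bool) :
    ∃ S : Finset (Fin t → Bool),
      S.card = 2 ^ (k + 1) - 1 ∧ w ∉ S ∧
      (∀ x ∈ S, t / 2 ≤ hammingDist x w) ∧
      ∀ x ∈ S, ∀ y ∈ S, x ≠ y → t / 2 ≤ hammingDist x y := by
  obtain ⟨m, hm⟩ := hk
  let e : Fin t ≃ Fin m × (Fin k → ZMod 2) :=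
    Fintype.equivOfCardEq (by simp [hm, ZMod.card, mul_comm])
  let word (p : (Fin k → ZMod 2) × ZMod 2) : Fin t → Bool :=
    offsetBy w fun i => affineForm p (e i).2
  have hdist (p q) (hpq : p ≠ q) : t ≤ 2 * hammingDist (word p) (word q) := by
    have := two_pow_card_le_two_mul_hammingNorm_affineForm (sub_ne_zero.mpr hpq.symm)
    rw [Fintype.card_fin] at this
    rw [hammingDist_offsetBy, hammingDist_comp_snd_equiv e, hammingDist_eq_hammingNorm,
      neg_affineForm_add_affineForm, Fintype.card_fin, hm]
    nlinarith
  have hword_zero : word 0 = w := by simp only [word, affineForm_zero]; exact offsetBy_zero w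
  have hinj : Function.Injective word := fun p q h => by
    by_contra hpq
    have := hdist p q hpq
    rw [h, hammingDist_self] at this
    omega
  refine ⟨(univ.erase 0).image word, ?_, ?_, ?_, ?_⟩
  · rw [card_image_of_injective _ hinj, card_erase_of_mem (mem_univ _), card_univ]
    simp [ZMod.card, pow_succ]
  · simp [← hword_zero, hinj.eq_iff]
  · simp only [mem_image, mem_erase]
    rintro _ ⟨p, ⟨hp, -⟩, rfl⟩
    have := hdist p 0 hp
    rw [hword_zero] at this
    omega
  · simp only [mem_image, mem_erase]
    rintro _ ⟨p, -, rfl⟩ _ ⟨q, -, rfl⟩ hpq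
    have := hdist p q (fun h => hpq (h ▸ rfl))
    omega

/-- Extension to general even lengths: if `2^k` exactly divides the positive
even integer `t`, then there exist `2^(k+1) − 1` binary strings of length `t`
that mutually differ from each other and from a given string `w` by at least
`t/2` coordinates. -/
theorem stmt_18 (t k : ℕ) (ht : 0 < t) (hte : 2 ∣ t)
    (hk : 2 ^ k ∣ t) (hk2 : ¬ 2 ^ (k + 1) ∣ t) (w : Fin t → Bool) :
    ∃ S : Finset (Fin t → Bool),
      S.card = 2 ^ (k + 1) - 1 ∧ w ∉ S ∧
      (∀ x ∈ S, t / 2 ≤ hammingDist x w) ∧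
      ∀ x ∈ S, ∀ y ∈ S, x ≠ y → t / 2 ≤ hammingDist x y :=
  stmt_18_general t k ht hk w
end
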